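/- arXiv:2401.10122 — 2 statements merged into one kernel-verified Lean document; each statement's English description precedes it below -/
import Mathlib

section
/- For any ε > 0 and β > e^{ε/k}, there is no neutral randomized approval-based committee rule satisfying both ε-DP and β-Pareto efficiency, assuming m ≥ n + 2k − 1. -/
open scoped Classical

noncomputable section

/-- A profile assigns to each of the `n` voters an approval ballot (a finite set of alternatives). -/
abbrev Profile (A : Type) (n : ℕ) := Fin n → Finset A

/-- Two profiles are neighboring if they differ in at most one voter's ballot. -/
def Neighboring {A : Type} {n : ℕ} (P P' : Profile A n) : Prop :=
  ∃ i : Fin n, ∀ j : Fin n, j ≠ i → P j = P' j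

/-- `W'` Pareto-dominates `W` in profile `P`. -/
def ParetoDom {A : Type} [DecidableEq A] {n : ℕ} (P : Profile A n) (W' W : Finset A) : Prop :=
  (∀ i, (W ∩ P i).card ≤ (W' ∩ P i).card) ∧ (∃ i, (W ∩ P i).card < (W' ∩ P i).card)

/-- The set of alternatives approved by every voter in `V`. -/
def commonApproved {A : Type} [Fintype A] {n : ℕ} (P : Profile A n) (V : Finset (Fin n)) :
    Finset A :=
  Finset.univ.filter (fun a => ∀ i ∈ V, a ∈ P i)

/-- `V` is an `ℓ`-cohesive group for `(P, k)`: `|V| ≥ ℓ·n/k` and `|⋂_{i∈V} P i| ≥ ℓ`. -/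
def Cohesive {A : Type} [Fintype A] {n : ℕ} (P : Profile A n) (k ℓ : ℕ)
    (V : Finset (Fin n)) : Prop :=
  ℓ * n ≤ V.card * k ∧ ℓ ≤ (commonApproved P V).card

/-- Committee `W` (of size `k`) satisfies justified representation for `(P, k)`. -/
def JRsat {A : Type} [Fintype A] [DecidableEq A] {n : ℕ} (P : Profile A n) (k : ℕ)
    (W : Finset A) : Prop :=
  W.card = k ∧ ∀ V : Finset (Fin n), Cohesive P k 1 V → ∃ i ∈ V, (P i ∩ W).Nonempty

/-- Committee `W` satisfies proportional justified representation for `(P, k)`. -/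
def PJRsat {A : Type} [Fintype A] [DecidableEq A] {n : ℕ} (P : Profile A n) (k : ℕ)
    (W : Finset A) : Prop :=
  W.card = k ∧ ∀ (ℓ : ℕ) (V : Finset (Fin n)), 1 ≤ ℓ → Cohesive P k ℓ V →
    ℓ ≤ (W ∩ V.biUnion P).card

/-- Committee `W` satisfies extended justified representation for `(P, k)`. -/
def EJRsat {A : Type} [Fintype A] [DecidableEq A] {n : ℕ} (P : Profile A n) (k : ℕ)
    (W : Finset A) : Prop :=
  W.card = k ∧ ∀ (ℓ : ℕ) (V : Finset (Fin n)), 1 ≤ ℓ → Cohesive P k ℓ V →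
    ∃ i ∈ V, ℓ ≤ (P i ∩ W).card

/-- `W` is a Condorcet committee for `(P, k)`: against every other size-`k` committee,
strictly more than half of the voters prefer `W`. -/
def CondorcetCommittee {A : Type} [Fintype A] [DecidableEq A] {n : ℕ} (P : Profile A n)
    (k : ℕ) (W : Finset A) : Prop :=
  W.card = k ∧ ∀ W' : Finset A, W'.card = k → W' ≠ W →
    n < 2 * (Finset.univ.filter
      (fun i : Fin n => (P i ∩ W').card < (P i ∩ W).card)).card

/-- A randomized approval-based committee (ABC) rule: for each profile and committee size `k`,
a probability distribution over the size-`k` committees. -/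
structure ABCRule (A : Type) [Fintype A] [DecidableEq A] (n : ℕ) where
  prob : Profile A n → ℕ → Finset A → ℝ
  nonneg : ∀ P k W, 0 ≤ prob P k W
  size_eq : ∀ P k W, prob P k W ≠ 0 → W.card = k
  sum_one : ∀ P k, k ≤ Fintype.card A →
    ∑ W ∈ Finset.univ.filter (fun W : Finset A => W.card = k), prob P k W = 1

variable {A : Type} [Fintype A] [DecidableEq A] {n : ℕ}

/-- ε-differential privacy at committee size `k`. -/
def DPAt (f : ABCRule A n) (k : ℕ) (ε : ℝ) : Prop :=
  ∀ (P P' : Profile A n) (W : Finset A),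
    Neighboring P P' → f.prob P k W ≤ Real.exp ε * f.prob P' k W

/-- ε-differential privacy: single-ballot changes alter each committee's winning
probability by a factor of at most `e^ε`. -/
def DP (f : ABCRule A n) (ε : ℝ) : Prop := ∀ k : ℕ, DPAt f k ε

/-- Neutrality: the rule commutes with permutations of the alternatives. -/
def Neutral (f : ABCRule A n) : Prop :=
  ∀ (σ : Equiv.Perm A) (P : Profile A n) (k : ℕ) (W : Finset A),
    f.prob (fun i => (P i).image σ) k (W.image σ) = f.prob P k W

/-- θ-JR: each JR committee wins with probability at least θ times that of each non-JR one. -/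
def ThetaJR (f : ABCRule A n) (θ : ℝ) : Prop :=
  ∀ (P : Profile A n) (k : ℕ) (W₁ W₂ : Finset A),
    JRsat P k W₁ → W₂.card = k → ¬ JRsat P k W₂ →
      θ * f.prob P k W₂ ≤ f.prob P k W₁

/-- ρ-PJR. -/
def RhoPJR (f : ABCRule A n) (ρ : ℝ) : Prop :=
  ∀ (P : Profile A n) (k : ℕ) (W₁ W₂ : Finset A),
    PJRsat P k W₁ → W₂.card = k → ¬ PJRsat P k W₂ →
      ρ * f.prob P k W₂ ≤ f.prob P k W₁

/-- κ-EJR. -/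
def KappaEJR (f : ABCRule A n) (κ : ℝ) : Prop :=
  ∀ (P : Profile A n) (k : ℕ) (W₁ W₂ : Finset A),
    EJRsat P k W₁ → W₂.card = k → ¬ EJRsat P k W₂ →
      κ * f.prob P k W₂ ≤ f.prob P k W₁

/-- Exact Condorcet criterion: whenever a Condorcet committee exists, it wins with
probability one. -/
def CondorcetCrit (f : ABCRule A n) : Prop :=
  ∀ (P : Profile A n) (k : ℕ) (W : Finset A),
    CondorcetCommittee P k W → f.prob P k W = 1

/-- η-Condorcet criterion. -/
def EtaCC (f : ABCRule A n) (η : ℝ) : Prop :=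
  ∀ (P : Profile A n) (k : ℕ) (Wc W : Finset A),
    CondorcetCommittee P k Wc → W.card = k → W ≠ Wc →
      η * f.prob P k W ≤ f.prob P k Wc

/-- Exact Pareto efficiency at committee size `k`: no committee in the support is
Pareto-dominated by another size-`k` committee. -/
def ParetoEffAt (f : ABCRule A n) (k : ℕ) : Prop :=
  ∀ (P : Profile A n) (W : Finset A), f.prob P k W ≠ 0 →
    ∀ W' : Finset A, W'.card = k → ¬ ParetoDom P W' W

/-- β-Pareto efficiency at committee size `k`. -/
def BetaPEAt (f : ABCRule A n) (k : ℕ) (β : ℝ) : Prop :=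
  ∀ (P : Profile A n) (W₁ W₂ : Finset A), W₁.card = k → W₂.card = k →
    ParetoDom P W₁ W₂ → β * f.prob P k W₂ ≤ f.prob P k W₁

/-- The approval voting score of a committee. -/
def AV (P : Profile A n) (W : Finset A) : ℕ := ∑ j, (P j ∩ W).card

/-- The set of size-`k` committees satisfying JR for `(P, k)`. -/
def JRset (P : Profile A n) (k : ℕ) : Finset (Finset A) :=
  Finset.univ.filter (fun W => JRsat P k W)

/-! ### Auxiliary material for the proof of `dp_betaPE_upper` -/

/-- Ladder level of index `m`: indices `< k` are the top alternatives (level `n`,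
approved by everyone), indices in `[k, 2k)` are the bottom alternatives (level `0`,
approved by nobody), and index `2k + s - 1` (for `1 ≤ s ≤ n - 1`) has level `s`. -/
def lvlaux (n k m : ℕ) : ℕ :=
  if m < k then n else if m < 2 * k then 0 else m - 2 * k + 1

/-- Membership predicate (on indices) for the `t`-th committee of the Pareto chain. -/
def InWaux (n k t m : ℕ) : Prop :=
  if m < k then m < t / n
  else if m < 2 * k then (t / n < m - k ∨ (t / n = m - k ∧ t % n = 0))
  else (t % n = m - 2 * k + 1 ∧ t / n < k)

lemma InWaux_eq (n k t m q r : ℕ) (hq : t / n = q) (hr : t % n = r) :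
    InWaux n k t m ↔
      (if m < k then m < q
       else if m < 2 * k then (q < m - k ∨ (q = m - k ∧ r = 0))
       else (r = m - 2 * k + 1 ∧ q < k)) := by
  subst hq; subst hr; rfl

/-- The chain profile: voter `i` approves the alternatives of level `> i`. -/
def chainP (k : ℕ) (ι : Fin (n + 2 * k - 1) ↪ A) : Profile A n :=
  fun i => (Finset.univ.filter fun m : Fin (n + 2 * k - 1) => (i : ℕ) < lvlaux n k m.val).image ι

/-- The `t`-th committee of the Pareto chain. -/
def chainW (k : ℕ) (ι : Fin (n + 2 * k - 1) ↪ A) (t : ℕ) : Finset A :=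
  (Finset.univ.filter fun m : Fin (n + 2 * k - 1) => InWaux n k t m.val).image ι

lemma mem_chainP {k : ℕ} (ι : Fin (n + 2 * k - 1) ↪ A) (i : Fin n)
    (a : Fin (n + 2 * k - 1)) :
    ι a ∈ chainP k ι i ↔ (i : ℕ) < lvlaux n k a.val := by
  simp only [chainP, Finset.mem_image, Finset.mem_filter, Finset.mem_univ, true_and]
  constructor
  · rintro ⟨m, hm, he⟩; rwa [ι.injective he] at hm
  · intro h; exact ⟨a, h, rfl⟩

lemma mem_chainW {k : ℕ} (ι : Fin (n + 2 * k - 1) ↪ A) (t : ℕ)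
    (a : Fin (n + 2 * k - 1)) :
    ι a ∈ chainW k ι t ↔ InWaux n k t a.val := by
  simp only [chainW, Finset.mem_image, Finset.mem_filter, Finset.mem_univ, true_and]
  constructor
  · rintro ⟨m, hm, he⟩; rwa [ι.injective he] at hm
  · intro h; exact ⟨a, h, rfl⟩

lemma mem_chainW' {k : ℕ} (ι : Fin (n + 2 * k - 1) ↪ A) (t : ℕ) (b : A) :
    b ∈ chainW k ι t ↔ ∃ m : Fin (n + 2 * k - 1), InWaux n k t m.val ∧ ι m = b := by
  simp only [chainW, Finset.mem_image, Finset.mem_filter, Finset.mem_univ, true_and]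

lemma chainW_zero_card (hn : 0 < n) {k : ℕ} (hk : 0 < k) (ι : Fin (n + 2 * k - 1) ↪ A) :
    (chainW k ι 0).card = k := by
  rw [chainW, Finset.card_image_of_injective _ ι.injective]
  have hfe : (Finset.univ.filter fun m : Fin (n + 2 * k - 1) => InWaux n k 0 m.val)
      = Finset.univ.filter fun m : Fin (n + 2 * k - 1) => k ≤ m.val ∧ m.val < 2 * k := by
    apply Finset.filter_congr
    intro m _
    rw [InWaux_eq n k 0 m.val 0 0 (Nat.zero_div n) (Nat.zero_mod n)]
    have := m.isLt
    split_ifs <;> first | omega | (simp only [false_and, false_iff]; omega)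
  have hbij : (Finset.univ.filter fun m : Fin (n + 2 * k - 1) =>
      k ≤ m.val ∧ m.val < 2 * k).card = (Finset.range k).card := by
    refine Finset.card_bij' (fun m _ => m.val - k)
      (fun j hj => ⟨k + j, by have := Finset.mem_range.mp hj; omega⟩) ?_ ?_ ?_ ?_
    · intro a ha
      simp only [Finset.mem_filter, Finset.mem_univ, true_and] at ha
      simp only [Finset.mem_range]
      omega
    · intro j hj
      have := Finset.mem_range.mp hj
      simp only [Finset.mem_filter, Finset.mem_univ, true_and]
      constructor <;> omega
    · intro a ha
      simp only [Finset.mem_filter, Finset.mem_univ, true_and] at ha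
      apply Fin.ext
      show k + (a.val - k) = a.val
      omega
    · intro j hj
      have := Finset.mem_range.mp hj
      show k + j - k = j
      omega
  rw [hfe, hbij, Finset.card_range]

/-- Replacing `x ∈ W` by a fresh `y` that is approved at least wherever `x` is,
and strictly more somewhere, yields a Pareto improvement. -/
lemma paretoDom_swap (P : Profile A n) (W : Finset A) (x y : A) (hx : x ∈ W) (hy : y ∉ W)
    (hmono : ∀ i, x ∈ P i → y ∈ P i) (i₀ : Fin n) (hy0 : y ∈ P i₀) (hx0 : x ∉ P i₀) :
    ParetoDom P (insert y (W.erase x)) W := by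
  have key : ∀ i : Fin n, (W ∩ P i).card ≤ ((insert y (W.erase x)) ∩ P i).card ∧
      (y ∈ P i → x ∉ P i → (W ∩ P i).card < ((insert y (W.erase x)) ∩ P i).card) := by
    intro i
    by_cases hyP : y ∈ P i
    · rw [Finset.insert_inter_of_mem hyP, Finset.erase_inter]
      have hyni : y ∉ (W ∩ P i).erase x := fun h =>
        hy (Finset.mem_inter.mp (Finset.mem_of_mem_erase h)).1
      rw [Finset.card_insert_of_notMem hyni]
      by_cases hxP : x ∈ P i
      · have hxm : x ∈ W ∩ P i := Finset.mem_inter.mpr ⟨hx, hxP⟩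
        rw [Finset.card_erase_of_mem hxm]
        have hpos : 0 < (W ∩ P i).card := Finset.card_pos.mpr ⟨x, hxm⟩
        exact ⟨by omega, fun _ hxn => absurd hxP hxn⟩
      · rw [Finset.erase_eq_of_notMem (fun h => hxP (Finset.mem_inter.mp h).2)]
        exact ⟨by omega, fun _ _ => by omega⟩
    · have hxP : x ∉ P i := fun h => hyP (hmono i h)
      rw [Finset.insert_inter_of_notMem hyP, Finset.erase_inter,
        Finset.erase_eq_of_notMem (fun h => hxP (Finset.mem_inter.mp h).2)]
      exact ⟨le_rfl, fun hyP' _ => absurd hyP' hyP⟩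
  exact ⟨fun i => (key i).1, ⟨i₀, (key i₀).2 hy0 hx0⟩⟩

lemma card_swap {W : Finset A} {x y : A} (hx : x ∈ W) (hy : y ∉ W) :
    (insert y (W.erase x)).card = W.card := by
  have h1 : y ∉ W.erase x := fun h => hy (Finset.mem_of_mem_erase h)
  rw [Finset.card_insert_of_notMem h1, Finset.card_erase_of_mem hx]
  have := Finset.card_pos.mpr ⟨x, hx⟩
  omega

/-- The key combinatorial step: for `t < nk`, the `(t+1)`-st chain committee is obtained
from the `t`-th by a single Pareto-improving swap. -/
lemma chainW_step (hn : 0 < n) {k : ℕ} (hk : 0 < k) (ι : Fin (n + 2 * k - 1) ↪ A)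
    {t : ℕ} (ht : t < n * k) :
    ∃ x y : A, x ∈ chainW k ι t ∧ y ∉ chainW k ι t ∧
      chainW k ι (t + 1) = insert y ((chainW k ι t).erase x) ∧
      (∀ i, x ∈ chainP k ι i → y ∈ chainP k ι i) ∧
      (∃ i₀ : Fin n, y ∈ chainP k ι i₀ ∧ x ∉ chainP k ι i₀) := by
  obtain ⟨q, r, hq, hr2⟩ : ∃ q r, t / n = q ∧ t % n = r := ⟨_, _, rfl, rfl⟩
  have hrn : r < n := hr2 ▸ Nat.mod_lt _ hn
  have hqk : q < k := by
    rw [← hq]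
    exact (Nat.div_lt_iff_lt_mul hn).mpr (by rwa [Nat.mul_comm] at ht)
  have hd : n * q + r = t := by rw [← hq, ← hr2]; exact Nat.div_add_mod t n
  obtain ⟨q', r', hq', hr2', hQR⟩ :
      ∃ q' r', (t + 1) / n = q' ∧ (t + 1) % n = r' ∧
        ((r + 1 = n ∧ q' = q + 1 ∧ r' = 0) ∨ (r + 1 < n ∧ q' = q ∧ r' = r + 1)) := by
    by_cases hc : r + 1 = n
    · have h1 : t + 1 = n * (q + 1) := by rw [Nat.mul_succ]; omega
      exact ⟨q + 1, 0, by rw [h1, Nat.mul_div_cancel_left _ hn],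
        by rw [h1]; exact Nat.mul_mod_right n (q + 1), Or.inl ⟨hc, rfl, rfl⟩⟩
    · have hlt : r + 1 < n := by omega
      have h1 : t + 1 = (r + 1) + n * q := by omega
      refine ⟨q, r + 1, ?_, ?_, Or.inr ⟨hlt, rfl, rfl⟩⟩
      · rw [h1, Nat.add_mul_div_left _ _ hn, Nat.div_eq_of_lt hlt, Nat.zero_add]
      · rw [h1, Nat.add_mul_mod_self_left, Nat.mod_eq_of_lt hlt]
  obtain ⟨ixv, hixlt, hix⟩ : ∃ v, v < n + 2 * k - 1 ∧
      ((r = 0 ∧ v = k + q) ∨ (0 < r ∧ v = 2 * k + r - 1)) := by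
    rcases Nat.eq_zero_or_pos r with h | h
    · exact ⟨k + q, by omega, Or.inl ⟨h, rfl⟩⟩
    · exact ⟨2 * k + r - 1, by omega, Or.inr ⟨h, rfl⟩⟩
  obtain ⟨iyv, hiylt, hiy⟩ : ∃ v, v < n + 2 * k - 1 ∧
      ((r + 1 = n ∧ v = q) ∨ (r + 1 < n ∧ v = 2 * k + r)) := by
    by_cases hc : r + 1 = n
    · exact ⟨q, by omega, Or.inl ⟨hc, rfl⟩⟩
    · exact ⟨2 * k + r, by omega, Or.inr ⟨by omega, rfl⟩⟩
  have hxin : InWaux n k t ixv := by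
    rw [InWaux_eq n k t ixv q r hq hr2]
    split_ifs <;> omega
  have hynot : ¬ InWaux n k t iyv := by
    rw [InWaux_eq n k t iyv q r hq hr2]
    split_ifs <;> omega
  have hyin1 : InWaux n k (t + 1) iyv := by
    rw [InWaux_eq n k (t + 1) iyv q' r' hq' hr2']
    split_ifs <;> omega
  have harith : ∀ mv, InWaux n k (t + 1) mv ↔
      (mv = iyv ∨ (InWaux n k t mv ∧ mv ≠ ixv)) := by
    intro mv
    rw [InWaux_eq n k (t + 1) mv q' r' hq' hr2', InWaux_eq n k t mv q r hq hr2]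
    split_ifs <;> omega
  have hlx : lvlaux n k ixv = r := by
    simp only [lvlaux]; split_ifs <;> omega
  have hly : lvlaux n k iyv = r + 1 := by
    simp only [lvlaux]; split_ifs <;> omega
  refine ⟨ι ⟨ixv, hixlt⟩, ι ⟨iyv, hiylt⟩, ?_, ?_, ?_, ?_, ?_⟩
  · exact (mem_chainW ι t ⟨ixv, hixlt⟩).mpr hxin
  · exact fun h => hynot ((mem_chainW ι t ⟨iyv, hiylt⟩).mp h)
  · ext b
    simp only [Finset.mem_insert, Finset.mem_erase]
    constructor
    · intro hb
      obtain ⟨m, hmW, rfl⟩ := (mem_chainW' ι (t + 1) b).mp hb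
      rcases (harith m.val).mp hmW with h | ⟨h1, h2⟩
      · exact Or.inl (congrArg ι (Fin.ext h))
      · refine Or.inr ⟨fun hxy => h2 (congrArg Fin.val (ι.injective hxy)),
          (mem_chainW' ι t _).mpr ⟨m, h1, rfl⟩⟩
    · rintro (rfl | ⟨hne, hbW⟩)
      · exact (mem_chainW' ι (t + 1) _).mpr ⟨⟨iyv, hiylt⟩, hyin1, rfl⟩
      · obtain ⟨m, hmW, rfl⟩ := (mem_chainW' ι t _).mp hbW
        exact (mem_chainW' ι (t + 1) _).mpr
          ⟨m, (harith m.val).mpr (Or.inr ⟨hmW, fun h => hne (congrArg ι (Fin.ext h))⟩), rfl⟩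
  · intro i hxi
    have hxi' : (i : ℕ) < lvlaux n k ixv := (mem_chainP ι i ⟨ixv, hixlt⟩).mp hxi
    refine (mem_chainP ι i ⟨iyv, hiylt⟩).mpr ?_
    show (i : ℕ) < lvlaux n k iyv
    omega
  · refine ⟨⟨r, hrn⟩, ?_, ?_⟩
    · refine (mem_chainP ι ⟨r, hrn⟩ ⟨iyv, hiylt⟩).mpr ?_
      show r < lvlaux n k iyv
      omega
    · intro h
      have h' : r < lvlaux n k ixv := (mem_chainP ι ⟨r, hrn⟩ ⟨ixv, hixlt⟩).mp h
      omega

/-- Along the chain, committees keep size `k` and the winning probability grows by a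
factor `β` at each of the `nk` steps. -/
lemma chain_all (f : ABCRule A n) {β : ℝ} (hβ0 : 0 ≤ β) {k : ℕ} (hn : 0 < n) (hk : 0 < k)
    (ι : Fin (n + 2 * k - 1) ↪ A) (hPE : BetaPEAt f k β) :
    ∀ t, t ≤ n * k → (chainW k ι t).card = k ∧
      β ^ t * f.prob (chainP k ι) k (chainW k ι 0) ≤ f.prob (chainP k ι) k (chainW k ι t) := by
  intro t
  induction t with
  | zero => intro _; exact ⟨chainW_zero_card hn hk ι, by simp⟩
  | succ t ih =>
    intro ht
    obtain ⟨hc, hle⟩ := ih (by omega)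
    obtain ⟨x, y, hx, hy, heq, hmono, i₀, hy0, hx0⟩ :=
      chainW_step hn hk ι (show t < n * k by omega)
    have hdom : ParetoDom (chainP k ι) (chainW k ι (t + 1)) (chainW k ι t) := by
      rw [heq]; exact paretoDom_swap (chainP k ι) (chainW k ι t) x y hx hy hmono i₀ hy0 hx0
    have hc' : (chainW k ι (t + 1)).card = k := by rw [heq, card_swap hx hy, hc]
    have h3 := hPE (chainP k ι) (chainW k ι (t + 1)) (chainW k ι t) hc' hc hdom
    refine ⟨hc', ?_⟩
    calc β ^ (t + 1) * f.prob (chainP k ι) k (chainW k ι 0)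
        = β * (β ^ t * f.prob (chainP k ι) k (chainW k ι 0)) := by ring
      _ ≤ β * f.prob (chainP k ι) k (chainW k ι t) := mul_le_mul_of_nonneg_left hle hβ0
      _ ≤ f.prob (chainP k ι) k (chainW k ι (t + 1)) := h3

/-- Any two profiles are linked by at most `n` single-ballot changes, so an `ε`-DP rule
changes probabilities by a factor of at most `e^{nε}`. -/
lemma dp_chain (f : ABCRule A n) {ε : ℝ} (hε : 0 ≤ ε) (hDP : DP f ε) (k : ℕ)
    (P Q : Profile A n) (W : Finset A) :
    f.prob Q k W ≤ Real.exp ((n : ℝ) * ε) * f.prob P k W := by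
  have main : ∀ j : ℕ, j ≤ n →
      f.prob Q k W ≤ Real.exp ((j : ℝ) * ε) *
        f.prob (fun i : Fin n => if (i : ℕ) < j then P i else Q i) k W := by
    intro j
    induction j with
    | zero =>
      intro _
      have hQ : (fun i : Fin n => if (i : ℕ) < 0 then P i else Q i) = Q := by
        funext i; simp
      rw [hQ]; simp
    | succ j ih =>
      intro hj
      have hjn : j < n := hj
      have h1 := ih (by omega)
      have hnb : Neighboring (fun i : Fin n => if (i : ℕ) < j then P i else Q i)
          (fun i : Fin n => if (i : ℕ) < j + 1 then P i else Q i) := by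
        refine ⟨⟨j, hjn⟩, fun l hl => ?_⟩
        have hlj : (l : ℕ) ≠ j := fun h => hl (Fin.ext h)
        show (if (l : ℕ) < j then P l else Q l) = (if (l : ℕ) < j + 1 then P l else Q l)
        split_ifs <;> first | rfl | omega
      have h2 := hDP k _ _ W hnb
      calc f.prob Q k W
          ≤ Real.exp ((j : ℝ) * ε) *
            f.prob (fun i : Fin n => if (i : ℕ) < j then P i else Q i) k W := h1
        _ ≤ Real.exp ((j : ℝ) * ε) * (Real.exp ε *
            f.prob (fun i : Fin n => if (i : ℕ) < j + 1 then P i else Q i) k W) :=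
            mul_le_mul_of_nonneg_left h2 (Real.exp_pos _).le
        _ = Real.exp (((j : ℕ) + 1 : ℕ) * ε) *
            f.prob (fun i : Fin n => if (i : ℕ) < j + 1 then P i else Q i) k W := by
            rw [← mul_assoc, ← Real.exp_add]
            congr 2
            push_cast
            ring
  have hfin := main n le_rfl
  have hPn : (fun i : Fin n => if (i : ℕ) < n then P i else Q i) = P := by
    funext i; simp [i.isLt]
  rwa [hPn] at hfin

lemma exists_perm_image (S T : Finset A) (h : S.card = T.card) :
    ∃ σ : Equiv.Perm A, S.image σ = T := by
  refine ⟨(Finset.equivOfCardEq h).extendSubtype, ?_⟩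
  apply Finset.eq_of_subset_of_card_le
  · intro a ha
    obtain ⟨b, hb, rfl⟩ := Finset.mem_image.mp ha
    exact (Finset.equivOfCardEq h).extendSubtype_mem b hb
  · rw [Finset.card_image_of_injective _ (Equiv.injective _), h]

/-- For ε > 0 and β > e^{ε/k}, no neutral ABC rule satisfies both ε-DP
and β-Pareto efficiency (assuming m ≥ n + 2k − 1). -/
theorem dp_betaPE_upper (f : ABCRule A n) (ε β : ℝ) (hε : 0 < ε)
    (k : ℕ) (hk : 0 < k) (hn : 0 < n) (hm : n + 2 * k - 1 ≤ Fintype.card A)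
    (hβ : Real.exp (ε / k) < β) :
    ¬ (Neutral f ∧ DP f ε ∧ BetaPEAt f k β) := by
  rintro ⟨hNeu, hDP, hPE⟩
  have hβ0 : 0 < β := lt_trans (Real.exp_pos _) hβ
  obtain ⟨ι⟩ : Nonempty (Fin (n + 2 * k - 1) ↪ A) :=
    Function.Embedding.nonempty_of_card_le (by rwa [Fintype.card_fin])
  obtain ⟨hcT, hineq⟩ := chain_all f hβ0.le hn hk ι hPE (n * k) le_rfl
  have hc0 : (chainW k ι 0).card = k := chainW_zero_card hn hk ι
  -- upper bound : prob of the top committee ≤ e^{nε} · prob of the bottom committee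
  obtain ⟨σ, hσ⟩ := exists_perm_image (chainW k ι (n * k)) (chainW k ι 0)
    (by rw [hcT, hc0])
  have hneu2 := hNeu σ (chainP k ι) k (chainW k ι (n * k))
  rw [hσ] at hneu2
  have h6 := dp_chain f hε.le hDP k (chainP k ι)
    (fun i => ((chainP k ι) i).image σ) (chainW k ι 0)
  rw [hneu2] at h6
  -- positivity of the top committee's probability
  have hkA : k ≤ Fintype.card A := by omega
  have hUnif : ∀ W₁ W₂ : Finset A, W₁.card = W₂.card →
      f.prob (fun _ => (∅ : Finset A)) k W₁ = f.prob (fun _ => (∅ : Finset A)) k W₂ := by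
    intro W₁ W₂ h
    obtain ⟨σ', hσ'⟩ := exists_perm_image W₂ W₁ h.symm
    have h2 := hNeu σ' (fun _ => (∅ : Finset A)) k W₂
    rw [hσ'] at h2
    simpa using h2
  have hQpos : 0 < f.prob (fun _ => (∅ : Finset A)) k (chainW k ι (n * k)) := by
    rcases (f.nonneg (fun _ => (∅ : Finset A)) k (chainW k ι (n * k))).lt_or_eq with h | h
    · exact h
    · exfalso
      have hsum := f.sum_one (fun _ => (∅ : Finset A)) k hkA
      have hall : ∀ V ∈ Finset.univ.filter (fun W : Finset A => W.card = k),
          f.prob (fun _ => (∅ : Finset A)) k V = 0 := by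
        intro V hV
        rw [hUnif V (chainW k ι (n * k)) ((Finset.mem_filter.mp hV).2.trans hcT.symm)]
        exact h.symm
      rw [Finset.sum_congr rfl hall] at hsum
      simp at hsum
  have h7 := dp_chain f hε.le hDP k (chainP k ι) (fun _ => (∅ : Finset A))
    (chainW k ι (n * k))
  have hexp : 0 < Real.exp ((n : ℝ) * ε) := Real.exp_pos _
  have hTpos : 0 < f.prob (chainP k ι) k (chainW k ι (n * k)) := by nlinarith
  have hp0pos : 0 < f.prob (chainP k ι) k (chainW k ι 0) := by nlinarith
  have h9 : β ^ (n * k) ≤ Real.exp ((n : ℝ) * ε) :=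
    le_of_mul_le_mul_right (le_trans hineq h6) hp0pos
  have h10 : Real.exp ((n : ℝ) * ε) = Real.exp (ε / k) ^ (n * k) := by
    rw [← Real.exp_nat_mul]
    congr 1
    have hkne : (k : ℝ) ≠ 0 := Nat.cast_ne_zero.mpr hk.ne'
    push_cast
    field_simp
  have h11 : Real.exp (ε / k) ^ (n * k) < β ^ (n * k) :=
    pow_lt_pow_left₀ hβ (Real.exp_pos _).le (Nat.mul_ne_zero hn.ne' hk.ne')
  rw [h10] at h9
  linarith
end
end

section
/- For any ε > 0 and η > e^ε, there is no randomized approval-based committee rule satisfying both ε-DP and the η-Condorcet criterion, assuming n is odd, n ≥ 3, and m ≥ k+1. -/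
open scoped Classical

noncomputable section

variable {A : Type} [Fintype A] [DecidableEq A] {n : ℕ}

/-!
Let `n = 2t + 1` and let `W₁ ≠ W₂` be committees of size `k`. If `t + 1` voters cast exactly `W₁`
and the others `W₂`, then `W₁` is the Condorcet committee; moving voter `t` over to `W₂` gives a
neighboring profile whose Condorcet committee is `W₂`. With `a, b` the probabilities of `W₁, W₂`
in the first profile and `a', b'` in the second, `η`-CC gives `η b ≤ a` and `η a' ≤ b'`, while
`ε`-DP gives `a ≤ e^ε a'` and `b' ≤ e^ε b`; hence `η² a ≤ e^{2ε} a`. Finally `a > 0`: otherwise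
`η`-CC forces every committee to probability `0`.
-/

open Finset

theorem Neighboring.symm {A : Type} {n : ℕ} {P P' : Profile A n} (h : Neighboring P P') :
    Neighboring P' P := by
  obtain ⟨i, hi⟩ := h
  exact ⟨i, fun j hj => (hi j hj).symm⟩

theorem card_inter_lt_of_card_eq_of_ne {A : Type} [DecidableEq A] {W W' : Finset A}
    (hcard : W'.card = W.card) (hne : W' ≠ W) : (W ∩ W').card < W.card := by
  refine card_lt_card ⟨inter_subset_left, fun hsub => hne ?_⟩
  exact (eq_of_subset_of_card_le (fun x hx => (mem_inter.mp (hsub hx)).2) hcard.le).symm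

theorem condorcetCommittee_of_majority_ballot {P : Profile A n} {k : ℕ} {Wc : Finset A}
    (hWc : Wc.card = k) (hmaj : n < 2 * #{i | P i = Wc}) : CondorcetCommittee P k Wc := by
  refine ⟨hWc, fun W' hW' hne => hmaj.trans_le (Nat.mul_le_mul_left 2 (card_le_card ?_))⟩
  intro i hi
  simp only [mem_filter, mem_univ, true_and] at hi ⊢
  rw [hi, inter_self]
  exact card_inter_lt_of_card_eq_of_ne (hW'.trans hWc.symm) hne

def thresholdProfile {A : Type} {n : ℕ} (s : ℕ) (B C : Finset A) : Profile A n :=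
  fun i => if (i : ℕ) < s then B else C

theorem neighboring_thresholdProfile_succ {A : Type} {n s : ℕ} (hs : s < n) (B C : Finset A) :
    Neighboring (thresholdProfile (n := n) (s + 1) B C) (thresholdProfile s B C) := by
  refine ⟨⟨s, hs⟩, fun j hj => ?_⟩
  have hjs : (j : ℕ) ≠ s := fun h => hj (Fin.ext h)
  simp only [thresholdProfile]
  split_ifs <;> first | rfl | omega

theorem condorcetCommittee_thresholdProfile_left {s k : ℕ} {B C : Finset A} (hB : B.card = k)
    (hs : s ≤ n) (hmaj : n < 2 * s) : CondorcetCommittee (thresholdProfile (n := n) s B C) k B := by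
  refine condorcetCommittee_of_majority_ballot hB (hmaj.trans_le (Nat.mul_le_mul_left 2 ?_))
  calc s = #{i : Fin n | (i : ℕ) < s} := by rw [Fin.card_filter_val_lt, min_eq_right hs]
    _ ≤ _ := card_le_card fun i hi => by simp_all [thresholdProfile]

theorem condorcetCommittee_thresholdProfile_right {s k : ℕ} {B C : Finset A} (hC : C.card = k)
    (hmaj : n < 2 * (n - s)) : CondorcetCommittee (thresholdProfile (n := n) s B C) k C := by
  refine condorcetCommittee_of_majority_ballot hC (hmaj.trans_le (Nat.mul_le_mul_left 2 ?_))
  calc n - s ≤ #{i : Fin n | ¬ (i : ℕ) < s} := by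
        have := card_filter_add_card_filter_not (s := (univ : Finset (Fin n))) (· < s)
        rw [Fin.card_filter_val_lt, card_univ, Fintype.card_fin] at this
        omega
    _ ≤ _ := card_le_card fun i hi => by simp_all [thresholdProfile]

theorem EtaCC.prob_pos {f : ABCRule A n} {η : ℝ} (hCC : EtaCC f η) (hη : 0 < η)
    {P : Profile A n} {k : ℕ} {Wc : Finset A} (hWc : CondorcetCommittee P k Wc) :
    0 < f.prob P k Wc := by
  refine (f.nonneg P k Wc).lt_of_ne fun h0 => ?_
  have hsum := f.sum_one P k (hWc.1 ▸ card_le_univ Wc)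
  refine one_ne_zero (hsum.symm.trans (sum_eq_zero fun W hW => ?_))
  obtain rfl | hne := eq_or_ne W Wc
  · exact h0.symm
  · have := hCC P k Wc W hWc (mem_filter.mp hW).2 hne
    rw [← h0] at this
    exact le_antisymm (nonpos_of_mul_nonpos_right this hη) (f.nonneg P k W)

theorem le_exp_of_neighboring_condorcetCommittee {f : ABCRule A n} {k : ℕ} {ε η : ℝ}
    (hDP : DPAt f k ε) (hCC : EtaCC f η) {P P' : Profile A n} (hPP' : Neighboring P P')
    {W W' : Finset A} (hW : CondorcetCommittee P k W) (hW' : CondorcetCommittee P' k W')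
    (hne : W ≠ W') : η ≤ Real.exp ε := by
  by_contra! hlt
  have he := Real.exp_pos ε
  have hη := he.trans hlt
  have hpos := hCC.prob_pos hη hW
  have hCC₁ : η * f.prob P k W' ≤ f.prob P k W := hCC P k W W' hW hW'.1 hne.symm
  have hCC₂ : η * f.prob P' k W ≤ f.prob P' k W' := hCC P' k W' W hW' hW.1 hne
  have hDP₁ := hDP P P' W hPP'
  have hDP₂ := hDP P' P W' hPP'.symm
  have hchain : η ^ 2 * f.prob P k W ≤ Real.exp ε ^ 2 * f.prob P k W :=
    calc η ^ 2 * f.prob P k W ≤ η ^ 2 * (Real.exp ε * f.prob P' k W) := by gcongr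
      _ = η * Real.exp ε * (η * f.prob P' k W) := by ring
      _ ≤ η * Real.exp ε * (Real.exp ε * f.prob P k W') :=
        mul_le_mul_of_nonneg_left (hCC₂.trans hDP₂) (mul_pos hη he).le
      _ = Real.exp ε ^ 2 * (η * f.prob P k W') := by ring
      _ ≤ Real.exp ε ^ 2 * f.prob P k W := by gcongr
  have : Real.exp ε ^ 2 * f.prob P k W < η ^ 2 * f.prob P k W := by gcongr
  linarith

theorem exists_ne_card_eq {k : ℕ} (hk : 0 < k) (hm : k + 1 ≤ Fintype.card A) :
    ∃ W₁ W₂ : Finset A, W₁.card = k ∧ W₂.card = k ∧ W₁ ≠ W₂ := by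
  obtain ⟨S, -, hS⟩ :=
    exists_subset_card_eq (s := (univ : Finset A)) (n := k + 1) (by rwa [card_univ])
  obtain ⟨a₁, ha₁, a₂, ha₂, hne⟩ := one_lt_card.mp (by omega : 1 < S.card)
  refine ⟨S.erase a₂, S.erase a₁, by rw [card_erase_of_mem ha₂, hS]; rfl,
    by rw [card_erase_of_mem ha₁, hS]; rfl, fun h => ?_⟩
  have : a₁ ∈ S.erase a₂ := mem_erase.mpr ⟨hne, ha₁⟩
  rw [h] at this
  exact (mem_erase.mp this).1 rfl

theorem dp_etaCC_upper_general (f : ABCRule A n) (ε η : ℝ)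
    (hη : Real.exp ε < η) (hodd : Odd n)
    (k : ℕ) (hk : 0 < k) (hm : k + 1 ≤ Fintype.card A) :
    ¬ (DP f ε ∧ EtaCC f η) := by
  rintro ⟨hDP, hCC⟩
  obtain ⟨t, ht⟩ := hodd
  obtain ⟨W₁, W₂, hW₁, hW₂, hne⟩ := exists_ne_card_eq hk hm
  exact hη.not_ge (le_exp_of_neighboring_condorcetCommittee (hDP k) hCC
    (neighboring_thresholdProfile_succ (s := t) (by omega) W₁ W₂)
    (condorcetCommittee_thresholdProfile_left hW₁ (by omega) (by omega))
    (condorcetCommittee_thresholdProfile_right hW₂ (by omega)) hne)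

/-- For ε > 0 and η > e^ε, no ABC rule satisfies both ε-DP and the
η-Condorcet criterion (assuming n odd, n ≥ 3, and m ≥ k + 1). -/
theorem dp_etaCC_upper (f : ABCRule A n) (ε η : ℝ) (hε : 0 < ε)
    (hη : Real.exp ε < η) (hodd : Odd n) (hn : 3 ≤ n)
    (k : ℕ) (hk : 0 < k) (hm : k + 1 ≤ Fintype.card A) :
    ¬ (DP f ε ∧ EtaCC f η) :=
  dp_etaCC_upper_general f ε η hη hodd k hk hm
end
end
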